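/- arXiv:1412.2665 — 2 statements merged into one kernel-verified Lean document; each statement's English description precedes it below -/
import Mathlib

section
/- Let e ≥ 2 be an integer and let u ∈ ℂ⟦X⟧ be a formal power series with nonzero constant coefficient. Set z = X^e · u and let z′ denote the formal derivative of z. Then there exists g ∈ ℂ⟦X⟧ such that z·(z − 1)·g = (z′)², and the order of g equals e − 2. -/
open PowerSeries

/-!
Write `z = X^(n+2) u`. By the Leibniz rule `z' = X^(n+1) v` with `v = (n+2) u + X u'`, and
`z (z - 1) = X^(n+2) w` with `w = u (z - 1)`. Both `v` and `w` have nonzero constant term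
(`(n+2) u(0)` and `-u(0)`), so `w` is invertible and `g = X^n v² w⁻¹` solves
`z (z - 1) g = z'²`; since `v² w⁻¹` is a unit, `g` has order exactly `n`.
-/

theorem PowerSeries.derivative_X_pow_succ_mul {R : Type*} [CommSemiring R] (n : ℕ) (u : R⟦X⟧) :
    d⁄dX R (X ^ (n + 1) * u) = X ^ n * ((n + 1 : R⟦X⟧) * u + X * d⁄dX R u) := by
  rw [Derivation.leibniz, Derivation.leibniz_pow, derivative_X, smul_eq_mul, smul_eq_mul,
    Nat.add_sub_cancel, pow_succ, nsmul_eq_mul, Nat.cast_add, Nat.cast_one]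
  ring

theorem PowerSeries.order_X_pow_mul_of_constantCoeff_ne_zero {R : Type*} [Semiring R]
    [NoZeroDivisors R] (n : ℕ) {φ : R⟦X⟧} (hφ : constantCoeff φ ≠ 0) :
    (X ^ n * φ).order = (n : ℕ∞) := by
  have : Nontrivial R := nontrivial_of_ne _ _ hφ
  rw [order_mul, order_X_pow, not_ne_iff.mp (mt order_ne_zero_iff_constCoeff_eq_zero.mp hφ),
    add_zero]

theorem PowerSeries.exists_mul_sub_one_mul_eq_derivative_sq {k : Type*} [Field k] {n : ℕ}
    {u : k⟦X⟧} (hu : constantCoeff u ≠ 0) (hn : (n + 2 : k) ≠ 0) :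
    ∃ g : k⟦X⟧, X ^ (n + 2) * u * (X ^ (n + 2) * u - 1) * g = (d⁄dX k (X ^ (n + 2) * u)) ^ 2 ∧
      g.order = n := by
  set z : k⟦X⟧ := X ^ (n + 2) * u
  set v : k⟦X⟧ := (n + 2 : k⟦X⟧) * u + X * d⁄dX k u
  set w : k⟦X⟧ := u * (z - 1)
  have hz' : d⁄dX k z = X ^ (n + 1) * v := by
    rw [derivative_X_pow_succ_mul (n + 1) u]
    push_cast
    ring
  have hv : constantCoeff v ≠ 0 := by
    have : constantCoeff v = (n + 2) * constantCoeff u := by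
      simp [v, map_ofNat]
    rw [this]
    exact mul_ne_zero hn hu
  have hw : constantCoeff w ≠ 0 := by
    simpa [w, z] using hu
  refine ⟨X ^ n * (v ^ 2 * w⁻¹), ?_, order_X_pow_mul_of_constantCoeff_ne_zero n ?_⟩
  · calc z * (z - 1) * (X ^ n * (v ^ 2 * w⁻¹))
        = X ^ (n + 1 + (n + 1)) * v ^ 2 * (w * w⁻¹) := by simp only [z, w]; ring
      _ = (d⁄dX k z) ^ 2 := by rw [PowerSeries.mul_inv_cancel w hw, hz']; ring
  · simpa using ⟨hv, hw⟩

/-- For `z = X^e · u` with `u(0) ≠ 0` and `e ≥ 2`, the pullback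
`(dz/z) ⊗ (dz/(z-1))`, i.e. the series `g` with `z(z-1)g = (z')²`,
exists and has order exactly `e - 2`. -/
theorem pullback_two_tensor_order (e : ℕ) (he : 2 ≤ e) (u : PowerSeries ℂ)
    (hu : PowerSeries.constantCoeff u ≠ 0) :
    ∃ g : PowerSeries ℂ,
      (PowerSeries.X ^ e * u) * ((PowerSeries.X ^ e * u) - 1) * g =
        (PowerSeries.derivative ℂ (PowerSeries.X ^ e * u)) ^ 2 ∧
      g.order = (e - 2 : ℕ) := by
  obtain ⟨n, rfl⟩ := Nat.exists_eq_add_of_le' he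
  rw [Nat.add_sub_cancel]
  exact exists_mul_sub_one_mul_eq_derivative_sq hu (by exact_mod_cast (n + 1).succ_ne_zero)
end

section
/- Let e ≥ 2 be an integer, let u ∈ ℂ⟦X⟧ have nonzero constant coefficient, and let c ∈ ℂ with c ≠ 0. Set z = X^e · u and let z′ be its formal derivative. Then there exists g ∈ ℂ⟦X⟧ such that z·(z − 1)·(z − c)·g = (z′)², and the order of g equals e − 2. -/
/-!
Write `e = n + 2`. Then `z' = X^(n+1) · w` with `w = (n+2) u + X u'`, and `w(0) = (n+2) u(0) ≠ 0`
in characteristic zero. Since `z(0) = 0` and `c ≠ 0`, the factor `u (z - 1)(z - c)` is a unit, so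
`z (z - 1)(z - c) = X^(n+2) · unit` divides `(z')² = X^(2n+2) · w²` with quotient `X^n` times a unit.
-/

open PowerSeries

namespace PowerSeries

theorem derivative_X_pow_succ_mul_s5 {R : Type*} [CommRing R] (n : ℕ) (u : R⟦X⟧) :
    d⁄dX R (X ^ (n + 1) * u) = X ^ n * (((n + 1 : ℕ) : R⟦X⟧) * u + X * d⁄dX R u) := by
  rw [Derivation.leibniz, Derivation.leibniz_pow, derivative_X, smul_eq_mul, smul_eq_mul]
  push_cast
  ring

theorem order_X_pow_mul_of_constantCoeff_ne_zero_s5 {R : Type*} [CommRing R] [IsDomain R] (n : ℕ)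
    {v : R⟦X⟧} (hv : constantCoeff v ≠ 0) : (X ^ n * v).order = (n : ℕ∞) := by
  have hv₀ : v.order = 0 := not_not.mp (order_ne_zero_iff_constCoeff_eq_zero.not.mpr hv)
  rw [order_mul, order_X_pow, hv₀, add_zero]

theorem exists_X_pow_mul_mul_eq_and_order_eq {k : Type*} [Field k] (m n : ℕ) {a b : k⟦X⟧}
    (ha : constantCoeff a ≠ 0) (hb : constantCoeff b ≠ 0) :
    ∃ g : k⟦X⟧, X ^ m * a * g = X ^ (m + n) * b ∧ g.order = n := by
  refine ⟨X ^ n * (b * a⁻¹), ?_, order_X_pow_mul_of_constantCoeff_ne_zero_s5 n ?_⟩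
  · calc X ^ m * a * (X ^ n * (b * a⁻¹)) = X ^ (m + n) * b * (a * a⁻¹) := by ring
      _ = X ^ (m + n) * b := by rw [PowerSeries.mul_inv_cancel a ha, mul_one]
  · simpa [ha] using hb

end PowerSeries

/-- For `z = X^e · u` with `u(0) ≠ 0`, `e ≥ 2`, and `c ≠ 0`, the series `g` with
`z(z-1)(z-c)g = (z′)²` exists and has order exactly `e - 2`: the pullback of
`(dz/z) ⊗ (dz/((z-1)(z-c)))` is regular and nonzero along the fiber over `z = 0`. -/
theorem pullback_two_tensor_three_poles_order (e : ℕ) (he : 2 ≤ e) (u : PowerSeries ℂ)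
    (hu : PowerSeries.constantCoeff u ≠ 0) (c : ℂ) (hc : c ≠ 0) :
    ∃ g : PowerSeries ℂ,
      (PowerSeries.X ^ e * u) * ((PowerSeries.X ^ e * u) - 1) *
          ((PowerSeries.X ^ e * u) - PowerSeries.C c) * g =
        (PowerSeries.derivative ℂ (PowerSeries.X ^ e * u)) ^ 2 ∧
      g.order = (e - 2 : ℕ) := by
  obtain ⟨n, rfl⟩ : ∃ n, e = n + 1 + 1 := ⟨e - 2, by omega⟩
  set z : ℂ⟦X⟧ := X ^ (n + 1 + 1) * u
  set w : ℂ⟦X⟧ := ((n + 1 + 1 : ℕ) : ℂ⟦X⟧) * u + X * d⁄dX ℂ u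
  have hz : constantCoeff z = 0 := by simp [z]
  have hunit : constantCoeff (u * (z - 1) * (z - C c)) ≠ 0 := by simp [hz, hu, hc]
  have hw : constantCoeff (w ^ 2) ≠ 0 := by
    have hn : ((n + 1 + 1 : ℕ) : ℂ) ≠ 0 := Nat.cast_ne_zero.mpr (n + 1).succ_ne_zero
    simpa [w, hu] using hn
  obtain ⟨g, hg, hord⟩ := exists_X_pow_mul_mul_eq_and_order_eq (n + 1 + 1) n hunit hw
  refine ⟨g, ?_, by simpa using hord⟩
  calc z * (z - 1) * (z - C c) * g = X ^ (n + 1 + 1) * (u * (z - 1) * (z - C c)) * g := by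
        simp only [z]; ring
    _ = (X ^ (n + 1) * w) ^ 2 := by rw [hg]; ring
    _ = (d⁄dX ℂ z) ^ 2 := by rw [derivative_X_pow_succ_mul_s5]
end
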